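/- In the distinguished pre-Nichols algebra B̃(HV₁), the element z₄ := x₄⁶ satisfies (ad_c x) z₄ = 0 for every generator x ∈ {x₁, x₂, x₃, x₄}; in particular x_i x₄⁶ = q₁⁶ x₄⁶ x_i for all i ∈ {1,2,3} and x₄ commutes with x₄⁶. -/

import Mathlib

/-!
Put `z = x y − q₁ y x`, so that `x y = z + q₁ y x`. Moving `x` to the right through `y ^ n`
one factor at a time and pushing each `z` that appears to the left of the remaining powers of
`y` with `y z = q₂ z y` gives
`x y ^ n = q₁ ^ n y ^ n x + (1 + q₁q₂ + ⋯ + (q₁q₂) ^ (n - 1)) z y ^ (n - 1)`.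
For `n = 6` and `q₁q₂ = −ω` the geometric sum vanishes, since
`1 − ω + ω² − ω³ + ω⁴ − ω⁵ = (1 − ω + ω²)(1 − ω³)`.
-/

/-- `z_h = x_h x₄ − q₁ x₄ x_h` (here `y` plays the role of `x₄` and the first
three generators are indexed by `ZMod 3`, with `x₃ = x 0`, so that `x 3 = x₃`). -/
def zz {k : Type*} [Field k] {A : Type*} [Ring A] [Algebra k A]
    (q1 : k) (x : ZMod 3 → A) (y : A) (h : ZMod 3) : A :=
  x h * y - q1 • (y * x h)

/-- `u_{ij} = (ad_c x_i) z_j = x_i z_j + q₁ z_{2i−j} x_i`. -/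
def uu {k : Type*} [Field k] {A : Type*} [Ring A] [Algebra k A]
    (q1 : k) (x : ZMod 3 → A) (y : A) (i j : ZMod 3) : A :=
  x i * zz q1 x y j + q1 • (zz q1 x y (2 * i - j) * x i)

open Finset

section QCommute

variable {k A : Type*} [CommSemiring k] [Semiring A] [Algebra k A]

theorem pow_mul_eq_smul_mul_pow {q : k} {y z : A} (h : y * z = q • (z * y)) (n : ℕ) :
    y ^ n * z = q ^ n • (z * y ^ n) := by
  have hsc : SemiconjBy z (q • y) y := by
    rw [SemiconjBy, mul_smul_comm, h]
  rw [← (hsc.pow_right n).eq, smul_pow, mul_smul_comm]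

variable {p q : k} {a y z : A}

theorem mul_pow_succ_eq_geom_sum_smul_add (hay : a * y = z + p • (y * a))
    (hyz : y * z = q • (z * y)) (n : ℕ) :
    a * y ^ (n + 1) =
      (∑ j ∈ range (n + 1), (p * q) ^ j) • (z * y ^ n) + p ^ (n + 1) • (y ^ (n + 1) * a) := by
  induction n with
  | zero => simpa using hay
  | succ n ih =>
    calc a * y ^ (n + 2) = a * y ^ (n + 1) * y := by rw [mul_assoc, ← pow_succ]
      _ = (∑ j ∈ range (n + 1), (p * q) ^ j) • (z * y ^ (n + 1))
            + p ^ (n + 1) • (y ^ (n + 1) * z) + p ^ (n + 2) • (y ^ (n + 2) * a) := by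
        rw [ih, add_mul, smul_mul_assoc, smul_mul_assoc, mul_assoc, ← pow_succ, mul_assoc,
          hay, mul_add, mul_smul_comm, ← mul_assoc, ← pow_succ, smul_add, smul_smul,
          ← pow_succ, ← add_assoc]
      _ = _ := by
        rw [pow_mul_eq_smul_mul_pow hyz, sum_range_succ _ (n + 1), smul_smul, ← mul_pow]
        module

theorem mul_pow_eq_smul_pow_mul (hay : a * y = z + p • (y * a)) (hyz : y * z = q • (z * y))
    {n : ℕ} (hn : ∑ j ∈ range n, (p * q) ^ j = 0) :
    a * y ^ n = p ^ n • (y ^ n * a) := by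
  cases n with
  | zero => simp
  | succ n => rw [mul_pow_succ_eq_geom_sum_smul_add hay hyz, hn, zero_smul, zero_add]

end QCommute

theorem geom_sum_neg_six_eq_zero {R : Type*} [CommRing R] {ω : R} (hω : ω ^ 3 = 1) :
    ∑ j ∈ range 6, (-ω) ^ j = 0 := by
  simp only [sum_range_succ, sum_range_zero]
  linear_combination (-ω ^ 2 + ω - 1) * hω

theorem ad_z4_zero_general {k : Type*} [Field k]
    (ω q1 q2 : k) (hω : ω ^ 3 = 1) (hq : q1 * q2 = -ω)
    {A : Type*} [Ring A] [Algebra k A] (x : ZMod 3 → A) (y : A)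
    (hz : ∀ h : ZMod 3, y * zz q1 x y h = q2 • (zz q1 x y h * y)) :
    (∀ i : ZMod 3, x i * y ^ 6 - q1 ^ 6 • (y ^ 6 * x i) = 0) ∧
    (y * y ^ 6 - y ^ 6 * y = 0) ∧
    (∀ i : ZMod 3, x i * y ^ 6 = q1 ^ 6 • (y ^ 6 * x i)) ∧
    Commute y (y ^ 6) := by
  have hxy : ∀ i, x i * y ^ 6 = q1 ^ 6 • (y ^ 6 * x i) := fun i =>
    mul_pow_eq_smul_pow_mul (sub_add_cancel _ _).symm (hz i)
      (by rw [hq]; exact geom_sum_neg_six_eq_zero hω)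
  have hcomm : Commute y (y ^ 6) := Commute.self_pow y 6
  exact ⟨fun i => sub_eq_zero_of_eq (hxy i), sub_eq_zero_of_eq hcomm, hxy, hcomm⟩

/-- in the distinguished pre-Nichols algebra `B̃(HV₁)`, the element
`z₄ = x₄⁶` satisfies `(ad_c x) z₄ = 0` for every generator: since
`g_i · x₄⁶ = q₁⁶ x₄⁶` and `g₄ · x₄⁶ = x₄⁶`, this says
`x_i x₄⁶ − q₁⁶ x₄⁶ x_i = 0` for `i ∈ {1,2,3}` and `x₄ x₄⁶ − x₄⁶ x₄ = 0`;
in particular `x_i x₄⁶ = q₁⁶ x₄⁶ x_i` and `x₄` commutes with `x₄⁶`. -/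
theorem ad_z4_zero {k : Type*} [Field k] [CharZero k]
    (ω q1 q2 : k) (hω : ω ^ 3 = 1) (hω1 : ω ≠ 1) (hq : q1 * q2 = -ω)
    {A : Type*} [Ring A] [Algebra k A] (x : ZMod 3 → A) (y : A)
    (hx2 : ∀ i : ZMod 3, x i ^ 2 = 0)
    (hs1 : x 1 * x 2 + x 3 * x 1 + x 2 * x 3 = 0)
    (hs2 : x 2 * x 1 + x 1 * x 3 + x 3 * x 2 = 0)
    (hu2 : uu q1 x y 2 1 = ω • uu q1 x y 1 3)
    (hu3 : uu q1 x y 3 1 = ω • uu q1 x y 1 2)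
    (hz : ∀ h : ZMod 3, y * zz q1 x y h = q2 • (zz q1 x y h * y)) :
    (∀ i : ZMod 3, x i * y ^ 6 - q1 ^ 6 • (y ^ 6 * x i) = 0) ∧
    (y * y ^ 6 - y ^ 6 * y = 0) ∧
    (∀ i : ZMod 3, x i * y ^ 6 = q1 ^ 6 • (y ^ 6 * x i)) ∧
    Commute y (y ^ 6) :=
  ad_z4_zero_general ω q1 q2 hω hq x y hz
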